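/- For every ξ ∈ ℝ with ξ ≠ 0, (φ' ∗ (φ²·φ'))(ξ) + (φ ∗ φ³)(ξ) = φ(ξ)·(1 − φ(ξ)²). (Here φ³ appears in the second convolution because the second derivative of φ equals φ away from the origin, so φ²·φ'' = φ³ on ℝ∖{0}.) -/

import Mathlib

open MeasureTheory Complex

/-- The peakon profile `φ(x) = exp(-|x|)`. -/
noncomputable def phi (x : ℝ) : ℝ := Real.exp (-|x|)

/-- The piecewise derivative of the peakon profile, `φ'(x) = -sgn(x)·exp(-|x|)`. -/
noncomputable def phi' (x : ℝ) : ℝ := -Real.sign x * Real.exp (-|x|)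

/-- Convolution of real-valued functions on `ℝ`. -/
noncomputable def conv (f g : ℝ → ℝ) (x : ℝ) : ℝ := ∫ y : ℝ, f (x - y) * g y

open Set Real

lemma measurable_rsign : Measurable Real.sign := by
  unfold Real.sign
  exact (measurable_const.ite (measurableSet_lt measurable_id measurable_const)
    (measurable_const.ite (measurableSet_lt measurable_const measurable_id) measurable_const)).comp measurable_id

lemma measurable_phi' : Measurable phi' := by
  unfold phi'
  exact (measurable_rsign.neg).mul ((measurable_id.abs.neg).exp)

lemma measurable_phi : Measurable phi := by
  unfold phi
  exact (measurable_id.abs.neg).exp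

lemma abs_sign_le (x : ℝ) : |Real.sign x| ≤ 1 := by
  rcases Real.sign_apply_eq x with h | h | h <;> rw [h] <;> norm_num

lemma abs_phi' (x : ℝ) : |phi' x| ≤ Real.exp (-|x|) := by
  unfold phi'
  rw [abs_mul, abs_neg, Real.abs_exp]
  calc |Real.sign x| * Real.exp (-|x|) ≤ 1 * Real.exp (-|x|) :=
        mul_le_mul_of_nonneg_right (abs_sign_le x) (Real.exp_pos _).le
    _ = _ := one_mul _

lemma integrable_exp_neg_abs : Integrable (fun y : ℝ => Real.exp (-(3 * |y|))) := by
  have hIoi : IntegrableOn (fun y : ℝ => Real.exp (-(3 * |y|))) (Ioi 0) := by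
    refine (exp_neg_integrableOn_Ioi 0 (by norm_num : (0:ℝ) < 3)).congr_fun
      (fun x hx => ?_) measurableSet_Ioi
    rw [abs_of_pos hx, ← neg_mul]
  have hIic : IntegrableOn (fun y : ℝ => Real.exp (-(3 * |y|))) (Iic 0) := by
    rw [← Measure.map_neg_eq_self (volume : Measure ℝ)]
    have m : MeasurableEmbedding fun x : ℝ => -x := (Homeomorph.neg ℝ).measurableEmbedding
    rw [m.integrableOn_map_iff]
    simp_rw [Function.comp_def, abs_neg, neg_preimage, neg_Iic, neg_zero]
    exact (integrableOn_Ici_iff_integrableOn_Ioi).mpr hIoi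
  rw [← integrableOn_univ, ← Set.Iic_union_Ioi (a := (0:ℝ))]
  exact hIic.union hIoi

lemma integrable1 (ξ : ℝ) :
    Integrable (fun y => phi' (ξ - y) * ((phi y) ^ 2 * phi' y)) := by
  refine integrable_exp_neg_abs.mono' ?_ ?_
  · exact ((measurable_phi'.comp (measurable_const.sub measurable_id)).mul
      ((measurable_phi.pow_const 2).mul measurable_phi')).aestronglyMeasurable
  · refine ae_of_all _ fun y => ?_
    have h1 : |phi' (ξ - y)| ≤ 1 :=
      (abs_phi' _).trans (Real.exp_le_one_iff.mpr (neg_nonpos.mpr (abs_nonneg _)))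
    have h2 : |phi y ^ 2| ≤ Real.exp (-(2 * |y|)) := by
      rw [_root_.abs_of_nonneg (by positivity), phi, ← Real.exp_nat_mul]
      apply Real.exp_le_exp.mpr; push_cast; nlinarith [abs_nonneg y]
    have h3 := abs_phi' y
    have e : Real.exp (-(3*|y|)) = 1 * (Real.exp (-(2*|y|)) * Real.exp (-|y|)) := by
      rw [one_mul, ← Real.exp_add]; ring_nf
    rw [Real.norm_eq_abs, abs_mul, abs_mul, e]
    exact mul_le_mul h1 (mul_le_mul h2 h3 (abs_nonneg _) (Real.exp_pos _).le)
      (by positivity) zero_le_one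

lemma integrable2 (ξ : ℝ) :
    Integrable (fun y => phi (ξ - y) * (phi y) ^ 3) := by
  refine integrable_exp_neg_abs.mono' ?_ ?_
  · exact ((measurable_phi.comp (measurable_const.sub measurable_id)).mul
      (measurable_phi.pow_const 3)).aestronglyMeasurable
  · refine ae_of_all _ fun y => ?_
    have h1 : |phi (ξ - y)| ≤ 1 := by
      rw [phi, Real.abs_exp]
      exact Real.exp_le_one_iff.mpr (neg_nonpos.mpr (abs_nonneg _))
    have h2 : |phi y ^ 3| ≤ Real.exp (-(3 * |y|)) := by
      simp only [phi]
      rw [_root_.abs_of_nonneg (by positivity), ← Real.exp_nat_mul]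
      apply Real.exp_le_exp.mpr; push_cast; nlinarith [abs_nonneg y]
    rw [Real.norm_eq_abs, abs_mul, ← one_mul (Real.exp _)]
    exact mul_le_mul h1 h2 (abs_nonneg _) zero_le_one

lemma key_pos (ξ : ℝ) (hξ : 0 < ξ) :
    conv phi' (fun y => (phi y) ^ 2 * phi' y) ξ + conv phi (fun y => (phi y) ^ 3) ξ
      = phi ξ * (1 - (phi ξ) ^ 2) := by
  unfold conv
  rw [← integral_add (integrable1 ξ) (integrable2 ξ)]
  have hcongr : (fun y => phi' (ξ - y) * ((phi y) ^ 2 * phi' y) + phi (ξ - y) * (phi y) ^ 3)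
      =ᵐ[volume] (Ioo (0:ℝ) ξ).indicator (fun y => 2 * Real.exp (-ξ - 2 * y)) := by
    have h0 : ∀ᵐ y : ℝ, y ≠ 0 := by
      refine ae_iff.mpr ?_
      simpa using measure_singleton (0 : ℝ)
    have hx : ∀ᵐ y : ℝ, y ≠ ξ := by
      refine ae_iff.mpr ?_
      simpa using measure_singleton ξ
    filter_upwards [h0, hx] with y hy0 hyξ
    rcases lt_trichotomy y 0 with hy | hy | hy
    · rw [Set.indicator_of_notMem (by simp [Set.mem_Ioo]; intro h; linarith)]
      have h1 : 0 < ξ - y := by linarith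
      simp only [phi, phi', Real.sign_of_pos h1, Real.sign_of_neg hy,
        abs_of_pos h1, abs_of_neg hy, neg_neg]
      ring
    · exact absurd hy hy0
    rcases lt_trichotomy y ξ with hy2 | hy2 | hy2
    · rw [Set.indicator_of_mem (Set.mem_Ioo.mpr ⟨hy, hy2⟩)]
      have h1 : 0 < ξ - y := by linarith
      simp only [phi, phi', Real.sign_of_pos h1, Real.sign_of_pos hy,
        abs_of_pos h1, abs_of_pos hy, neg_neg]
      rw [show -ξ - 2 * y = -(ξ - y) + -y + (-y + -y) by ring,
        Real.exp_add, Real.exp_add, Real.exp_add]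
      ring
    · exact absurd hy2 hyξ
    · rw [Set.indicator_of_notMem (by simp [Set.mem_Ioo]; intro h; linarith)]
      have h1 : ξ - y < 0 := by linarith
      simp only [phi, phi', Real.sign_of_neg h1, Real.sign_of_pos hy,
        abs_of_neg h1, abs_of_pos hy, neg_neg]
      ring
  rw [integral_congr_ae hcongr, integral_indicator measurableSet_Ioo,
    ← integral_Ioc_eq_integral_Ioo, ← intervalIntegral.integral_of_le hξ.le]
  have hderiv : ∀ y ∈ Set.uIcc (0:ℝ) ξ,
      HasDerivAt (fun y => -Real.exp (-ξ - 2 * y)) (2 * Real.exp (-ξ - 2 * y)) y := by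
    intro y _
    have h1 : HasDerivAt (fun y : ℝ => -ξ - 2 * y) (-2) y := by
      simpa using ((hasDerivAt_id y).const_mul 2).const_sub (-ξ)
    have := ((Real.hasDerivAt_exp (-ξ - 2 * y)).comp y h1).neg
    exact this.congr_deriv (by ring)
  rw [intervalIntegral.integral_eq_sub_of_hasDerivAt hderiv
    (Continuous.intervalIntegrable (by continuity) 0 ξ)]
  simp only [phi, abs_of_pos hξ, mul_zero, sub_zero]
  rw [show -ξ - 2 * ξ = -ξ + (-ξ + -ξ) by ring, Real.exp_add, Real.exp_add]
  ring

/-- for every `ξ ≠ 0`, `(φ' ∗ (φ²φ'))(ξ) + (φ ∗ φ³)(ξ) = φ(ξ)·(1 - φ(ξ)²)`. -/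
theorem conv_identity_Q_phi' :
    ∀ ξ : ℝ, ξ ≠ 0 →
      conv phi' (fun y => (phi y) ^ 2 * phi' y) ξ + conv phi (fun y => (phi y) ^ 3) ξ
        = phi ξ * (1 - (phi ξ) ^ 2) := by
  intro ξ hξ
  rcases hξ.lt_or_gt with h | h
  · have key := key_pos (-ξ) (by linarith)
    have e1 : conv phi' (fun y => (phi y) ^ 2 * phi' y) ξ
        = conv phi' (fun y => (phi y) ^ 2 * phi' y) (-ξ) := by
      unfold conv
      rw [← integral_neg_eq_self (fun y => phi' (-ξ - y) * ((phi y) ^ 2 * phi' y)) volume]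
      congr 1
      ext y
      simp only [phi, phi', abs_neg, Real.sign_neg, sub_neg_eq_add]
      rw [show -ξ + y = -(ξ - y) by ring, Real.sign_neg, abs_neg]
      ring
    have e2 : conv phi (fun y => (phi y) ^ 3) ξ = conv phi (fun y => (phi y) ^ 3) (-ξ) := by
      unfold conv
      rw [← integral_neg_eq_self (fun y => phi (-ξ - y) * (phi y) ^ 3) volume]
      congr 1
      ext y
      simp only [phi, abs_neg, sub_neg_eq_add]
      rw [show -ξ + y = -(ξ - y) by ring, abs_neg]
    have e3 : phi ξ = phi (-ξ) := by simp [phi]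
    rw [e1, e2, e3]; exact key
  · exact key_pos ξ h
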